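/- Let H be a nonempty stack history over value set V, possibly containing failed operations (operations with method pop or peek and value ε). Let ⊥ ∉ V, let t_min be the minimum invocation time over H, and let H_⊥ be obtained from H by replacing, in each failed operation, the method by peek and the value by ⊥ (keeping its times), and adding one fresh operation with method push, value ⊥, invocation time t_min − 2 and response time t_min − 1. Then H is linearizable with respect to the stack specification with failed operations over V if and only if H_⊥ is linearizable with respect to the stack specification (without failed operations) over V ∪ {⊥}. -/

import Mathlib

structure Operation (M V : Type) where
  id : ℕ
  method : M
  value : V
  tinv : ℚ
  tres : ℚ
deriving DecidableEq

def WellFormed {M V : Type} (H : Finset (Operation M V)) : Prop :=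
  ∀ o ∈ H, o.tinv < o.tres

def IsPartitionState {M V : Type} (H S : Finset (Operation M V)) : Prop :=
  S ⊆ H ∧ ∃ t : ℚ, ∀ o ∈ H, (o.tres < t → o ∈ S) ∧ (t < o.tinv → o ∉ S)

def IsLinearization {M V : Type} (X : Finset (Operation M V)) (ℓ : Operation M V → ℚ) : Prop :=
  Set.InjOn ℓ ↑X ∧ ∀ o ∈ X, o.tinv < ℓ o ∧ ℓ o < o.tres

/-- `τ` is the abstract sequence induced by `ℓ` on `X`: it lists the
abstractions of the elements of `X` in increasing order of `ℓ`. -/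
def InducedSeq {M V A : Type} (abs : Operation M V → A) (X : Finset (Operation M V))
    (ℓ : Operation M V → ℚ) (τ : List A) : Prop :=
  ∃ ops : List (Operation M V), ops.map abs = τ ∧ (∀ o, o ∈ ops ↔ o ∈ X) ∧
    ops.Pairwise (fun a b => ℓ a < ℓ b)

/-- A specification is prefix-closed. -/
def PrefixClosed {A : Type} (T : Set (List A)) : Prop :=
  ∀ u v : List A, u ++ v ∈ T → u ∈ T

/-- The certificate of a set of operations: all abstract sequences induced by
legal linearizations of it. -/
def certs {M V : Type} (T : Set (List (M × V))) (S : Finset (Operation M V)) :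
    Set (List (M × V)) :=
  {τ | ∃ ℓ, IsLinearization S ℓ ∧
    InducedSeq (fun o => (o.method, o.value)) S ℓ τ ∧ τ ∈ T}

/-- τ1 ∼ τ2 : the two sequences admit exactly the same legal continuations. -/
def SpecEquiv {A : Type} (T : Set (List A)) (τ1 τ2 : List A) : Prop :=
  ∀ τ' : List A, τ1 ++ τ' ∈ T ↔ τ2 ++ τ' ∈ T

/-- A specification is anagram-agnostic if any two of its members that are
permutations of one another are equivalent. -/
def AnagramAgnostic {A : Type} (T : Set (List A)) : Prop :=
  ∀ τ1 ∈ T, ∀ τ2 ∈ T, τ1.Perm τ2 → SpecEquiv T τ1 τ2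

inductive StackOp (V : Type) : Type
  | push (v : V) : StackOp V
  | pop (v : V) : StackOp V
  | peek (v : V) : StackOp V
deriving DecidableEq

/-- Execution of stack sequences: `StackExec σ w σ'` holds when the sequence
`w` can be legally executed starting from stack `σ` (top at the head), ending
with stack `σ'`.  `push v` pushes `v`; `pop v` (resp. `peek v`) is enabled
only when the top is `v` and removes it (resp. leaves the stack unchanged). -/
inductive StackExec {V : Type} : List V → List (StackOp V) → List V → Prop
  | nil (σ : List V) : StackExec σ [] σ
  | push {σ σ' : List V} {w : List (StackOp V)} (v : V) :
      StackExec (v :: σ) w σ' → StackExec σ (StackOp.push v :: w) σ'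
  | pop {σ σ' : List V} {w : List (StackOp V)} (v : V) :
      StackExec σ w σ' → StackExec (v :: σ) (StackOp.pop v :: w) σ'
  | peek {σ σ' : List V} {w : List (StackOp V)} (v : V) :
      StackExec (v :: σ) w σ' → StackExec (v :: σ) (StackOp.peek v :: w) σ'

/-- The stack specification: sequences executable from the empty stack. -/
def TStack (V : Type) : Set (List (StackOp V)) :=
  {w | ∃ σ : List V, StackExec [] w σ}

/-- Methods of the stack data type. -/
inductive StackMethod : Type
  | push : StackMethod
  | pop : StackMethod
  | peek : StackMethod
deriving DecidableEq

/-- The stack symbol `m(o)(v(o))` of an operation. -/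
def absStackOp {V : Type} (o : Operation StackMethod V) : StackOp V :=
  match o.method with
  | StackMethod.push => StackOp.push o.value
  | StackMethod.pop => StackOp.pop o.value
  | StackMethod.peek => StackOp.peek o.value

/-- `X` is linearizable w.r.t. specification `T`: some linearization of `X`
induces an abstract sequence belonging to `T`. -/
def Linearizable {M V A : Type} (T : Set (List A)) (abs : Operation M V → A)
    (X : Finset (Operation M V)) : Prop :=
  ∃ (ℓ : Operation M V → ℚ) (τ : List A),
    IsLinearization X ℓ ∧ InducedSeq abs X ℓ τ ∧ τ ∈ T

/-- Execution of stack sequences with failed operations over value set `V`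
(value `none` is `ε`): `push (some v)` pushes `v`; `pop (some v)` and
`peek (some v)` are enabled only when the top is `v`; the failed operations
`pop none` and `peek none` are enabled exactly when the stack is empty and
leave it empty.  (`push none` is never enabled.) -/
inductive FStackExec {V : Type} : List V → List (StackOp (Option V)) → List V → Prop
  | nil (σ : List V) : FStackExec σ [] σ
  | push {σ σ' : List V} {w : List (StackOp (Option V))} (v : V) :
      FStackExec (v :: σ) w σ' → FStackExec σ (StackOp.push (some v) :: w) σ'
  | pop {σ σ' : List V} {w : List (StackOp (Option V))} (v : V) :
      FStackExec σ w σ' → FStackExec (v :: σ) (StackOp.pop (some v) :: w) σ'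
  | peek {σ σ' : List V} {w : List (StackOp (Option V))} (v : V) :
      FStackExec (v :: σ) w σ' → FStackExec (v :: σ) (StackOp.peek (some v) :: w) σ'
  | popFail {σ' : List V} {w : List (StackOp (Option V))} :
      FStackExec [] w σ' → FStackExec [] (StackOp.pop none :: w) σ'
  | peekFail {σ' : List V} {w : List (StackOp (Option V))} :
      FStackExec [] w σ' → FStackExec [] (StackOp.peek none :: w) σ'

/-- The stack specification with failed operations over `V`. -/
def TFStack (V : Type) : Set (List (StackOp (Option V))) :=
  {w | ∃ σ : List V, FStackExec [] w σ}


-- ===== auxiliary material =====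

lemma exec_push_cons {W : Type} {σ σ' : List W} {w} {v} (h : StackExec σ (StackOp.push v :: w) σ') :
    StackExec (v :: σ) w σ' := by cases h; assumption

lemma exec_pop_cons {W : Type} {σ σ' : List W} {w} {v} (h : StackExec σ (StackOp.pop v :: w) σ') :
    ∃ σ₀, σ = v :: σ₀ ∧ StackExec σ₀ w σ' := by
  cases h with | pop v h => exact ⟨_, rfl, h⟩

lemma exec_peek_cons {W : Type} {σ σ' : List W} {w} {v} (h : StackExec σ (StackOp.peek v :: w) σ') :
    (∃ σ₀, σ = v :: σ₀) ∧ StackExec σ w σ' := by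
  cases h with | peek v h => exact ⟨⟨_, rfl⟩, h⟩

inductive PSub {α : Type} (P : α → Prop) : List α → List α → Prop
  | nil : PSub P [] []
  | keep (a : α) {l₁ l₂ : List α} : PSub P l₁ l₂ → PSub P (a :: l₁) (a :: l₂)
  | skip (a : α) {l₁ l₂ : List α} : P a → PSub P l₁ l₂ → PSub P l₁ (a :: l₂)

lemma PSub.map_f {α β : Type} {P : α → Prop} {Q : β → Prop} {h : α → β}
    (hPQ : ∀ a, P a → Q (h a)) : ∀ {l₁ l₂}, PSub P l₁ l₂ → PSub Q (l₁.map h) (l₂.map h) := by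
  intro l₁ l₂ hs
  induction hs with
  | nil => exact .nil
  | keep a _ ih => exact .keep (h a) ih
  | skip a ha _ ih => exact .skip (h a) (hPQ a ha) ih

lemma psub_filter {α : Type} (p : α → Bool) : ∀ l : List α, PSub (fun a => p a = false) (l.filter p) l := by
  intro l
  induction l with
  | nil => exact .nil
  | cons a t ih =>
    by_cases h : p a = true
    · rw [List.filter_cons_of_pos h]; exact .keep a ih
    · rw [List.filter_cons_of_neg h]
      exact .skip a (Bool.eq_false_iff.2 h) ih

lemma exec_psub {W : Type} : ∀ {w₁ w₂ : List (StackOp W)},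
    PSub (fun s => ∃ v, s = StackOp.peek v) w₁ w₂ →
    ∀ {σ σ'}, StackExec σ w₂ σ' → StackExec σ w₁ σ' := by
  intro w₁ w₂ hs
  induction hs with
  | nil => intro σ σ' h; exact h
  | keep a _ ih =>
    intro σ σ' h
    cases a with
    | push v => exact .push v (ih (exec_push_cons h))
    | pop v =>
      obtain ⟨σ₀, rfl, h'⟩ := exec_pop_cons h
      exact .pop v (ih h')
    | peek v =>
      obtain ⟨⟨σ₀, rfl⟩, h'⟩ := exec_peek_cons h
      exact .peek v (ih h')
  | skip a ha _ ih =>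
    intro σ σ' h
    obtain ⟨v, rfl⟩ := ha
    obtain ⟨⟨σ₀, rfl⟩, h'⟩ := exec_peek_cons h
    exact ih h'

def gsym {V : Type} : StackOp (Option V) → StackOp (Option V)
  | StackOp.pop none => StackOp.peek none
  | StackOp.peek none => StackOp.peek none
  | s => s

lemma fexec_gsym {V : Type} : ∀ {σ σ' : List V} {w}, FStackExec σ w σ' →
    StackExec (σ.map some ++ [none]) (w.map gsym) (σ'.map some ++ [none]) := by
  intro σ σ' w h
  induction h with
  | nil σ => exact .nil _
  | push v _ ih =>
    simp only [List.map_cons, List.cons_append] at ih ⊢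
    exact .push _ ih
  | pop v _ ih =>
    simp only [List.map_cons, List.cons_append] at ih ⊢
    exact .pop _ ih
  | peek v _ ih =>
    simp only [List.map_cons, List.cons_append] at ih ⊢
    exact .peek _ ih
  | popFail _ ih =>
    simp only [List.map_cons, List.map_nil, List.nil_append] at ih ⊢
    exact .peek _ ih
  | peekFail _ ih =>
    simp only [List.map_cons, List.map_nil, List.nil_append] at ih ⊢
    exact .peek _ ih

def fail2peek {W : Type} [DecidableEq W] (o : Operation StackMethod (Option W)) :
    Operation StackMethod (Option W) :=
  if o.value = none then { o with method := StackMethod.peek } else o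

section F2P
variable {W : Type} [DecidableEq W]

@[simp] lemma fail2peek_id (o : Operation StackMethod (Option W)) : (fail2peek o).id = o.id := by
  unfold fail2peek; split <;> rfl

@[simp] lemma fail2peek_value (o : Operation StackMethod (Option W)) : (fail2peek o).value = o.value := by
  unfold fail2peek; split <;> rfl

@[simp] lemma fail2peek_tinv (o : Operation StackMethod (Option W)) : (fail2peek o).tinv = o.tinv := by
  unfold fail2peek; split <;> rfl

@[simp] lemma fail2peek_tres (o : Operation StackMethod (Option W)) : (fail2peek o).tres = o.tres := by
  unfold fail2peek; split <;> rfl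

lemma fail2peek_method_none {o : Operation StackMethod (Option W)} (h : o.value = none) :
    (fail2peek o).method = StackMethod.peek := by simp [fail2peek, h]

lemma fail2peek_of_some {o : Operation StackMethod (Option W)} (h : o.value ≠ none) :
    fail2peek o = o := by simp [fail2peek, h]

lemma op_ext {M U : Type} {a b : Operation M U} (h1 : a.id = b.id) (h2 : a.method = b.method)
    (h3 : a.value = b.value) (h4 : a.tinv = b.tinv) (h5 : a.tres = b.tres) : a = b := by
  cases a; cases b; simp_all

lemma set_method_eq {M U : Type} {o : Operation M U} {m : M} (h : o.method = m) :
    { o with method := m } = o := by cases o; simp_all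

lemma fail2peek_value_none_of_ne {o₁ o₂ : Operation StackMethod (Option W)}
    (h : fail2peek o₁ = fail2peek o₂) (hne : o₁ ≠ o₂) : o₁.value = none := by
  by_contra hv
  have hval : o₁.value = o₂.value := by
    rw [← fail2peek_value o₁, ← fail2peek_value o₂, h]
  rw [fail2peek_of_some hv, fail2peek_of_some (hval ▸ hv)] at h
  exact hne h

lemma abs_fail2peek {o : Operation StackMethod (Option W)}
    (hp : o.method = StackMethod.push → o.value ≠ none) :
    absStackOp (fail2peek o) = gsym (absStackOp o) := by
  rcases o with ⟨i, m, v, ti, tr⟩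
  cases m <;> rcases v with _ | v <;> simp_all [absStackOp, fail2peek, gsym]

lemma fail2peek_ne_p0 {o : Operation StackMethod (Option W)} {a b : ℚ} :
    fail2peek o ≠ ⟨0, StackMethod.push, none, a, b⟩ := by
  intro h
  by_cases hv : o.value = none
  · have := fail2peek_method_none hv
    rw [h] at this
    simp at this
  · have := fail2peek_value o
    rw [h] at this
    simp_all

def pre {W : Type} [DecidableEq W] (H : Finset (Operation StackMethod (Option W)))
    (x : Operation StackMethod (Option W)) : List (Operation StackMethod (Option W)) :=
  if x.value = none then
    [{ x with method := StackMethod.pop }, { x with method := StackMethod.peek }].filter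
      (fun o => decide (o ∈ H))
  else [x]

lemma img_none_method {H : Finset (Operation StackMethod (Option W))}
    {x : Operation StackMethod (Option W)} (hx : x ∈ H.image fail2peek) (h : x.value = none) :
    x.method = StackMethod.peek := by
  obtain ⟨o, _, rfl⟩ := Finset.mem_image.1 hx
  by_cases hv : o.value = none
  · exact fail2peek_method_none hv
  · rw [fail2peek_of_some hv] at h ⊢
    exact absurd h hv

lemma pre_mem_f {H : Finset (Operation StackMethod (Option W))}
    {x a : Operation StackMethod (Option W)} (hx : x ∈ H.image fail2peek)
    (ha : a ∈ pre H x) : a ∈ H ∧ fail2peek a = x := by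
  by_cases hv : x.value = none
  · rw [pre, if_pos hv] at ha
    rw [List.mem_filter] at ha
    obtain ⟨hmem, hH⟩ := ha
    have haH : a ∈ H := of_decide_eq_true hH
    refine ⟨haH, ?_⟩
    have hxm : x.method = StackMethod.peek := img_none_method hx hv
    simp only [List.mem_cons, List.not_mem_nil, or_false] at hmem
    have havn : a.value = none := by
      rcases hmem with rfl | rfl <;> exact hv
    rcases hmem with rfl | rfl <;>
    · refine op_ext ?_ ?_ ?_ ?_ ?_ <;> simp [fail2peek, hv, hxm]
  · rw [pre, if_neg hv] at ha
    simp only [List.mem_singleton] at ha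
    subst ha
    obtain ⟨o, hoH, rfl⟩ := Finset.mem_image.1 hx
    have hov : o.value ≠ none := by
      intro h; exact hv (by rw [fail2peek_value]; exact h)
    rw [fail2peek_of_some hov] at *
    exact ⟨hoH, fail2peek_of_some hov⟩

lemma mem_pre_self {H : Finset (Operation StackMethod (Option W))}
    {o : Operation StackMethod (Option W)} (hoH : o ∈ H)
    (hp : o.method = StackMethod.push → o.value ≠ none) : o ∈ pre H (fail2peek o) := by
  by_cases hv : o.value = none
  · have hfv : (fail2peek o).value = none := by rw [fail2peek_value]; exact hv
    rw [pre, if_pos hfv, List.mem_filter]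
    constructor
    · have hfo : fail2peek o = { o with method := StackMethod.peek } := by
        rw [fail2peek, if_pos hv]
      cases hm : o.method with
      | push => exact absurd hv (hp hm)
      | pop =>
        refine List.mem_cons.2 (Or.inl ?_)
        refine op_ext ?_ ?_ ?_ ?_ ?_ <;> simp [hm]
      | peek =>
        refine List.mem_cons.2 (Or.inr (List.mem_cons.2 (Or.inl ?_)))
        refine op_ext ?_ ?_ ?_ ?_ ?_ <;> simp [hm]
    · exact decide_eq_true hoH
  · rw [fail2peek_of_some hv]
    simp [pre, hv]

end F2P

lemma fexec_fails_prefix {W : Type} : ∀ (s : List (StackOp (Option W)))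
    (_ : ∀ y ∈ s, y = StackOp.pop none ∨ y = StackOp.peek none)
    {E : List (StackOp (Option W))} {σ' : List W},
    FStackExec [] E σ' → FStackExec [] (s ++ E) σ' := by
  intro s hs E σ' hE
  induction s with
  | nil => exact hE
  | cons y t ih =>
    have ht := ih (fun z hz => hs z (List.mem_cons_of_mem _ hz))
    rcases hs y List.mem_cons_self with rfl | rfl
    · exact .popFail ht
    · exact .peekFail ht

lemma exec_expand {W : Type} [DecidableEq W] (H : Finset (Operation StackMethod (Option W))) :
    ∀ (l : List (Operation StackMethod (Option W))) (σs : List W)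
      (σfin : List (Option W)),
    (∀ x ∈ l, x ∈ H.image fail2peek) →
    StackExec (σs.map some ++ [none]) (l.map absStackOp) σfin →
    ∃ σ', FStackExec σs (l.flatMap (fun x => (pre H x).map absStackOp)) σ' := by
  intro l
  induction l with
  | nil => intro σs σfin _ _; exact ⟨σs, .nil σs⟩
  | cons x t ih =>
    intro σs σfin hmem hexec
    have hx : x ∈ H.image fail2peek := hmem x List.mem_cons_self
    have hmemt : ∀ z ∈ t, z ∈ H.image fail2peek := fun z hz => hmem z (List.mem_cons_of_mem _ hz)
    rw [List.map_cons] at hexec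
    rw [List.flatMap_cons]
    by_cases hv : x.value = none
    · -- failed op: abs x = peek none
      have hxm : x.method = StackMethod.peek := img_none_method hx hv
      have habs : absStackOp x = StackOp.peek none := by
        simp [absStackOp, hxm, hv]
      rw [habs] at hexec
      obtain ⟨⟨σ₀, hσ⟩, hcont⟩ := exec_peek_cons hexec
      have hσs : σs = [] := by
        cases σs with
        | nil => rfl
        | cons w σs' => simp at hσ
      subst hσs
      simp only [List.map_nil, List.nil_append] at hcont
      obtain ⟨σ', hσ'⟩ := ih [] σfin hmemt (by simpa using hcont)
      refine ⟨σ', fexec_fails_prefix _ ?_ hσ'⟩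
      intro y hy
      rw [List.mem_map] at hy
      obtain ⟨a, ha, rfl⟩ := hy
      rw [pre, if_pos hv] at ha
      rw [List.mem_filter] at ha
      simp only [List.mem_cons, List.not_mem_nil, or_false] at ha
      rcases ha.1 with rfl | rfl
      · left; simp [absStackOp, hv]
      · right; simp [absStackOp, hv]
    · -- normal op over some value
      obtain ⟨v, hvv⟩ : ∃ v, x.value = some v := Option.ne_none_iff_exists'.1 hv
      have hpre : pre H x = [x] := by rw [pre, if_neg hv]
      rw [hpre]
      cases hm : x.method with
      | push =>
        have habs : absStackOp x = StackOp.push (some v) := by simp [absStackOp, hm, hvv]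
        rw [habs] at hexec
        have hcont := exec_push_cons hexec
        have : some v :: (σs.map some ++ [none]) = (v :: σs).map some ++ [none] := by simp
        rw [this] at hcont
        obtain ⟨σ', hσ'⟩ := ih (v :: σs) σfin hmemt hcont
        exact ⟨σ', by simpa [habs] using FStackExec.push v hσ'⟩
      | pop =>
        have habs : absStackOp x = StackOp.pop (some v) := by simp [absStackOp, hm, hvv]
        rw [habs] at hexec
        obtain ⟨σ₀, hσ, hcont⟩ := exec_pop_cons hexec
        cases σs with
        | nil => simp at hσ
        | cons w σs' =>
          simp only [List.map_cons, List.cons_append, List.cons.injEq] at hσ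
          obtain ⟨hw, hσ₀⟩ := hσ
          have hw' : w = v := by injection hw
          subst hw'
          rw [← hσ₀] at hcont
          obtain ⟨σ', hσ'⟩ := ih σs' σfin hmemt hcont
          exact ⟨σ', by simpa [habs] using FStackExec.pop w hσ'⟩
      | peek =>
        have habs : absStackOp x = StackOp.peek (some v) := by simp [absStackOp, hm, hvv]
        rw [habs] at hexec
        obtain ⟨⟨σ₀, hσ⟩, hcont⟩ := exec_peek_cons hexec
        cases σs with
        | nil => simp at hσ
        | cons w σs' =>
          have hw' : w = v := by
            simp only [List.map_cons, List.cons_append, List.cons.injEq] at hσ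
            injection hσ.1
          subst hw'
          obtain ⟨σ', hσ'⟩ := ih (w :: σs') σfin hmemt hcont
          exact ⟨σ', by simpa [habs] using FStackExec.peek w hσ'⟩

lemma forwardDir {V : Type} [DecidableEq V] (H : Finset (Operation StackMethod (Option V)))
    (hne : H.Nonempty)
    (hpush : ∀ o ∈ H, o.method = StackMethod.push → o.value ≠ none) :
    Linearizable (TFStack V) absStackOp H →
    Linearizable (TStack (Option V)) absStackOp
      (insert
        (⟨0, StackMethod.push, none,
          H.inf' hne (fun o => o.tinv) - 2, H.inf' hne (fun o => o.tinv) - 1⟩ :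
            Operation StackMethod (Option V))
        (H.image fail2peek)) := by
  classical
  rintro ⟨ℓ, τ, ⟨hinj, hint⟩, ⟨ops, hmap, hmem, hpair⟩, σf, hexec⟩
  set tmin := H.inf' hne (fun o => o.tinv) with htmin
  set p0 : Operation StackMethod (Option V) :=
    ⟨0, StackMethod.push, none, tmin - 2, tmin - 1⟩ with hp0def
  have htmin_le : ∀ o ∈ H, tmin ≤ o.tinv := fun o ho => Finset.inf'_le _ ho
  have hbound : ∀ o ∈ H, tmin - 3/2 < ℓ o := by
    intro o ho
    have h1 := (hint o ho).1
    have h2 := htmin_le o ho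
    linarith
  set ℓ' : Operation StackMethod (Option V) → ℚ := fun x =>
    if h : (H.filter (fun o => fail2peek o = x)).Nonempty then
      ((H.filter (fun o => fail2peek o = x)).image ℓ).max' (h.image ℓ)
    else tmin - 3/2 with hℓ'def
  have hℓ'p0 : ℓ' p0 = tmin - 3/2 := by
    rw [hℓ'def]
    have hno : ¬ (H.filter (fun o => fail2peek o = p0)).Nonempty := by
      rintro ⟨o, ho⟩
      rw [Finset.mem_filter] at ho
      exact fail2peek_ne_p0 (hp0def ▸ ho.2)
    exact dif_neg hno
  have hA1 : ∀ o ∈ H, ∃ os ∈ H, fail2peek os = fail2peek o ∧ ℓ' (fail2peek o) = ℓ os ∧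
      ∀ o₂ ∈ H, fail2peek o₂ = fail2peek o → ℓ o₂ ≤ ℓ os := by
    intro o ho
    have hsne : (H.filter (fun o₂ => fail2peek o₂ = fail2peek o)).Nonempty :=
      ⟨o, Finset.mem_filter.2 ⟨ho, rfl⟩⟩
    obtain ⟨os, hoss, hmax⟩ :=
      Finset.exists_max_image (H.filter (fun o₂ => fail2peek o₂ = fail2peek o)) ℓ hsne
    rw [Finset.mem_filter] at hoss
    have heval : ℓ' (fail2peek o) =
        ((H.filter (fun o₂ => fail2peek o₂ = fail2peek o)).image ℓ).max' (hsne.image ℓ) :=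
      dif_pos hsne
    refine ⟨os, hoss.1, hoss.2, ?_, ?_⟩
    · rw [heval]
      apply le_antisymm
      · apply Finset.max'_le
        intro b hb
        rw [Finset.mem_image] at hb
        obtain ⟨o₂, ho₂, rfl⟩ := hb
        exact hmax o₂ ho₂
      · have hosmem : os ∈ H.filter (fun o₂ => fail2peek o₂ = fail2peek o) :=
          Finset.mem_filter.2 ⟨hoss.1, hoss.2⟩
        exact Finset.le_max' _ _ (Finset.mem_image_of_mem ℓ hosmem)
    · intro o₂ h2 he
      exact hmax o₂ (Finset.mem_filter.2 ⟨h2, he⟩)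
  set keepB : Operation StackMethod (Option V) → Bool := fun o =>
    decide (∀ o₂ ∈ H, fail2peek o₂ = fail2peek o → ℓ o₂ ≤ ℓ o) with hkeep
  have hA3 : ∀ o ∈ H, keepB o = true → ℓ' (fail2peek o) = ℓ o := by
    intro o ho hk
    obtain ⟨os, hosH, hfe, hval, hmax⟩ := hA1 o ho
    rw [hkeep] at hk
    have hk' := of_decide_eq_true hk
    have h1 : ℓ os ≤ ℓ o := hk' os hosH hfe
    have h2 : ℓ o ≤ ℓ os := hmax o ho rfl
    rw [hval, le_antisymm h1 h2]
  refine ⟨ℓ', _, ⟨?_, ?_⟩, ⟨p0 :: (ops.filter keepB).map fail2peek, rfl, ?_, ?_⟩, ?_⟩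
  · -- injectivity
    intro x₁ hx₁ x₂ hx₂ he
    rw [Finset.coe_insert, Set.mem_insert_iff] at hx₁ hx₂
    rcases hx₁ with rfl | hx₁ <;> rcases hx₂ with rfl | hx₂
    · rfl
    · exfalso
      rw [Finset.mem_coe] at hx₂
      obtain ⟨o, ho, rfl⟩ := Finset.mem_image.1 hx₂
      obtain ⟨os, hosH, hfe, hval, _⟩ := hA1 o ho
      rw [hℓ'p0, hval] at he
      have := hbound os hosH
      linarith
    · exfalso
      rw [Finset.mem_coe] at hx₁
      obtain ⟨o, ho, rfl⟩ := Finset.mem_image.1 hx₁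
      obtain ⟨os, hosH, hfe, hval, _⟩ := hA1 o ho
      rw [hℓ'p0, hval] at he
      have := hbound os hosH
      linarith
    · rw [Finset.mem_coe] at hx₁ hx₂
      obtain ⟨o₁, ho₁, rfl⟩ := Finset.mem_image.1 hx₁
      obtain ⟨o₂, ho₂, rfl⟩ := Finset.mem_image.1 hx₂
      obtain ⟨os₁, hosH₁, hfe₁, hval₁, _⟩ := hA1 o₁ ho₁
      obtain ⟨os₂, hosH₂, hfe₂, hval₂, _⟩ := hA1 o₂ ho₂
      rw [hval₁, hval₂] at he
      have : os₁ = os₂ := hinj (Finset.mem_coe.2 hosH₁) (Finset.mem_coe.2 hosH₂) he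
      rw [← hfe₁, ← hfe₂, this]
  · -- intervals
    intro x hx
    rcases Finset.mem_insert.1 hx with rfl | hx
    · rw [hℓ'p0]
      rw [hp0def]
      constructor <;> norm_num
    · obtain ⟨o, ho, rfl⟩ := Finset.mem_image.1 hx
      obtain ⟨os, hosH, hfe, hval, _⟩ := hA1 o ho
      rw [hval, ← hfe]
      simp only [fail2peek_tinv, fail2peek_tres]
      exact hint os hosH
  · -- membership
    intro x
    simp only [List.mem_cons, List.mem_map, List.mem_filter, Finset.mem_insert, Finset.mem_image]
    constructor
    · rintro (rfl | ⟨o, ⟨hops, hk⟩, rfl⟩)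
      · left; rfl
      · right; exact ⟨o, (hmem o).1 hops, rfl⟩
    · rintro (rfl | ⟨o, ho, rfl⟩)
      · left; rfl
      · right
        obtain ⟨os, hosH, hfe, hval, hmax⟩ := hA1 o ho
        refine ⟨os, ⟨(hmem os).2 hosH, ?_⟩, hfe⟩
        rw [hkeep]
        exact decide_eq_true (fun o₂ h2 he2 => hmax o₂ h2 (he2.trans hfe))
  · -- pairwise
    rw [List.pairwise_cons]
    constructor
    · intro b hb
      rw [List.mem_map] at hb
      obtain ⟨o, ho', rfl⟩ := hb
      rw [List.mem_filter] at ho'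
      have hoH := (hmem o).1 ho'.1
      rw [hℓ'p0, hA3 o hoH ho'.2]
      exact hbound o hoH
    · rw [List.pairwise_map]
      have hbase : (ops.filter keepB).Pairwise (fun a b => ℓ a < ℓ b) := hpair.filter keepB
      refine List.Pairwise.imp_of_mem ?_ hbase
      intro a b ha hb hab
      rw [List.mem_filter] at ha hb
      rw [hA3 a ((hmem a).1 ha.1) ha.2, hA3 b ((hmem b).1 hb.1) hb.2]
      exact hab
  · -- the sequence is executable
    rw [← hmap] at hexec
    have hsem := fexec_gsym hexec
    simp only [List.map_nil, List.nil_append, List.map_map] at hsem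
    have hcongr : ops.map (gsym ∘ absStackOp) = ops.map (fun o => absStackOp (fail2peek o)) := by
      apply List.map_congr_left
      intro o ho
      exact (abs_fail2peek (hpush o ((hmem o).1 ho))).symm
    rw [hcongr] at hsem
    have hps : PSub (fun s => ∃ v, s = StackOp.peek v)
        ((ops.filter keepB).map (fun o => absStackOp (fail2peek o)))
        (ops.map (fun o => absStackOp (fail2peek o))) := by
      refine PSub.map_f ?_ (psub_filter keepB ops)
      intro a hk
      rw [hkeep] at hk
      have hnall : ¬ (∀ o₂ ∈ H, fail2peek o₂ = fail2peek a → ℓ o₂ ≤ ℓ a) :=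
        of_decide_eq_false hk
      push_neg at hnall
      obtain ⟨o₂, h2H, hfe, hlt⟩ := hnall
      have hne2 : a ≠ o₂ := by
        rintro rfl
        exact absurd le_rfl (not_le.2 hlt)
      have hav : a.value = none := fail2peek_value_none_of_ne hfe.symm hne2
      refine ⟨none, ?_⟩
      have h1 : (fail2peek a).method = StackMethod.peek := fail2peek_method_none hav
      have h2 : (fail2peek a).value = none := by rw [fail2peek_value]; exact hav
      simp [absStackOp, h1, h2, hav]
    have hexec2 := exec_psub hps hsem
    refine ⟨σf.map some ++ [none], ?_⟩
    rw [List.map_cons, List.map_map]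
    have habs_p0 : absStackOp p0 = StackOp.push none := by rw [hp0def]; rfl
    rw [habs_p0]
    exact StackExec.push none hexec2

lemma fail2peek_setmethod {W : Type} [DecidableEq W] {x : Operation StackMethod (Option W)}
    (hv : x.value = none) (hxm : x.method = StackMethod.peek) (m : StackMethod) :
    fail2peek { x with method := m } = x := by
  have h1 : ({ x with method := m } : Operation StackMethod (Option W)).value = none := hv
  rw [fail2peek, if_pos h1]
  exact set_method_eq hxm

lemma backwardDir {V : Type} [DecidableEq V] (H : Finset (Operation StackMethod (Option V)))
    (hne : H.Nonempty)
    (hpush : ∀ o ∈ H, o.method = StackMethod.push → o.value ≠ none) :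
    Linearizable (TStack (Option V)) absStackOp
      (insert
        (⟨0, StackMethod.push, none,
          H.inf' hne (fun o => o.tinv) - 2, H.inf' hne (fun o => o.tinv) - 1⟩ :
            Operation StackMethod (Option V))
        (H.image fail2peek)) →
    Linearizable (TFStack V) absStackOp H := by
  classical
  rintro ⟨ℓ', τ', ⟨hinj', hint'⟩, ⟨ops', hmap', hmem', hpair'⟩, σfin, hexec'⟩
  set tmin := H.inf' hne (fun o => o.tinv) with htmin
  set p0 : Operation StackMethod (Option V) :=
    ⟨0, StackMethod.push, none, tmin - 2, tmin - 1⟩ with hp0def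
  set Hb := insert p0 (H.image fail2peek) with hHb
  have htmin_le : ∀ o ∈ H, tmin ≤ o.tinv := fun o ho => Finset.inf'_le _ ho
  have hp0mem : p0 ∈ Hb := Finset.mem_insert_self _ _
  have himgmem : ∀ o ∈ H, fail2peek o ∈ Hb :=
    fun o ho => Finset.mem_insert_of_mem (Finset.mem_image_of_mem _ ho)
  have hp0tres : p0.tres = tmin - 1 := by rw [hp0def]
  have hℓ'p0_lt : ∀ x ∈ H.image fail2peek, ℓ' p0 < ℓ' x := by
    intro x hx
    obtain ⟨o, ho, rfl⟩ := Finset.mem_image.1 hx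
    have h1 := (hint' p0 hp0mem).2
    rw [hp0tres] at h1
    have h2 := (hint' _ (himgmem o ho)).1
    rw [fail2peek_tinv] at h2
    have h3 := htmin_le o ho
    linarith
  have hp0notin : p0 ∉ H.image fail2peek := by
    intro h
    obtain ⟨o, _, he⟩ := Finset.mem_image.1 h
    exact fail2peek_ne_p0 (hp0def ▸ he)
  -- ops' decomposes as p0 :: rest
  obtain ⟨rest, rfl⟩ : ∃ rest, ops' = p0 :: rest := by
    cases hops' : ops' with
    | nil =>
      rw [hops'] at hmem'
      exact absurd ((hmem' p0).2 hp0mem) List.not_mem_nil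
    | cons y rest =>
      rw [hops'] at hmem' hpair'
      have hy : y = p0 := by
        have hyH : y ∈ Hb := (hmem' y).1 List.mem_cons_self
        rcases Finset.mem_insert.1 hyH with h | hyimg
        · exact h
        · exfalso
          have hp0' : p0 ∈ y :: rest := (hmem' p0).2 hp0mem
          rcases List.mem_cons.1 hp0' with h | h
          · exact hp0notin (h ▸ hyimg)
          · have hlt := (List.pairwise_cons.1 hpair').1 p0 h
            exact absurd hlt (not_lt.2 (le_of_lt (hℓ'p0_lt y hyimg)))
      exact ⟨rest, by rw [hy]⟩
  have hp0nr : p0 ∉ rest := by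
    intro h
    exact lt_irrefl _ ((List.pairwise_cons.1 hpair').1 p0 h)
  have hrest : ∀ x, x ∈ rest ↔ x ∈ H.image fail2peek := by
    intro x
    constructor
    · intro hx
      have hxx := (hmem' x).1 (List.mem_cons_of_mem _ hx)
      rcases Finset.mem_insert.1 hxx with rfl | h
      · exact absurd hx hp0nr
      · exact h
    · intro hx
      have hxx := (hmem' x).2 (Finset.mem_insert_of_mem hx)
      rcases List.mem_cons.1 hxx with rfl | h
      · exact absurd hx hp0notin
      · exact h
  have hpairrest : rest.Pairwise (fun a b => ℓ' a < ℓ' b) := (List.pairwise_cons.1 hpair').2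
  -- the separation constant
  set D := ((Hb ×ˢ Hb).image (fun p => ℓ' p.1 - ℓ' p.2) ∪
      H.image (fun o => ℓ' (fail2peek o) - o.tinv)).filter (fun q => 0 < q) with hD
  obtain ⟨o₀, ho₀⟩ := hne
  have hDne : D.Nonempty := by
    refine ⟨ℓ' (fail2peek o₀) - o₀.tinv, ?_⟩
    rw [hD, Finset.mem_filter]
    constructor
    · exact Finset.mem_union_right _ (Finset.mem_image_of_mem _ ho₀)
    · have h := (hint' _ (himgmem o₀ ho₀)).1
      rw [fail2peek_tinv] at h
      simpa using h
  set m := D.min' hDne with hm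
  have hmpos : 0 < m := by
    have h := Finset.min'_mem D hDne
    rw [hm]
    exact (Finset.mem_filter.1 h).2
  set ε := m / 2 with hε
  have hε0 : 0 < ε := by rw [hε]; linarith
  have hgap : ∀ x ∈ Hb, ∀ y ∈ Hb, ℓ' x < ℓ' y → ℓ' x + 2 * ε ≤ ℓ' y := by
    intro x hx y hy hlt
    have hmemD : ℓ' y - ℓ' x ∈ D := by
      rw [hD, Finset.mem_filter]
      refine ⟨Finset.mem_union_left _ (Finset.mem_image.2 ⟨(y, x), Finset.mem_product.2 ⟨hy, hx⟩, rfl⟩), by linarith⟩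
    have h := Finset.min'_le D _ hmemD
    rw [← hm] at h
    rw [hε]
    linarith
  have hinv2 : ∀ o ∈ H, o.tinv + 2 * ε ≤ ℓ' (fail2peek o) := by
    intro o ho
    have hmemD : ℓ' (fail2peek o) - o.tinv ∈ D := by
      rw [hD, Finset.mem_filter]
      refine ⟨Finset.mem_union_right _ (Finset.mem_image_of_mem _ ho), ?_⟩
      have h := (hint' _ (himgmem o ho)).1
      rw [fail2peek_tinv] at h
      simpa using h
    have h := Finset.min'_le D _ hmemD
    rw [← hm] at h
    rw [hε]
    linarith
  set δ : Operation StackMethod (Option V) → ℚ := fun o =>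
    if o.method = StackMethod.pop ∧ o.value = none then ε else 0 with hδ
  have hδ0 : ∀ o, 0 ≤ δ o ∧ δ o ≤ ε := by
    intro o
    rw [hδ]
    dsimp only
    split <;> constructor <;> linarith
  set ℓ : Operation StackMethod (Option V) → ℚ := fun o => ℓ' (fail2peek o) - δ o with hℓ
  have hδpop : ∀ o, o.method = StackMethod.pop → o.value = none → δ o = ε := by
    intro o h1 h2
    rw [hδ]
    dsimp only
    rw [if_pos ⟨h1, h2⟩]
  have hδpeek : ∀ o, o.method ≠ StackMethod.pop → δ o = 0 := by
    intro o h1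
    rw [hδ]
    dsimp only
    rw [if_neg (fun hc => h1 hc.1)]
  have hlin : IsLinearization H ℓ := by
    constructor
    · intro o₁ h₁ o₂ h₂ he
      rw [Finset.mem_coe] at h₁ h₂
      rw [hℓ] at he
      dsimp only at he
      by_cases hf : fail2peek o₁ = fail2peek o₂
      · have hδe : δ o₁ = δ o₂ := by rw [hf] at he; linarith
        by_cases hv : o₁.value = none
        · have hv₂ : o₂.value = none := by
            rw [← fail2peek_value o₂, ← hf, fail2peek_value]; exact hv
          have hm₁ : o₁.method ≠ StackMethod.push := fun h => hpush o₁ h₁ h hv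
          have hm₂ : o₂.method ≠ StackMethod.push := fun h => hpush o₂ h₂ h hv₂
          have hmm : o₁.method = o₂.method := by
            by_cases c₁ : o₁.method = StackMethod.pop <;>
              by_cases c₂ : o₂.method = StackMethod.pop
            · rw [c₁, c₂]
            · rw [hδpop o₁ c₁ hv, hδpeek o₂ c₂] at hδe
              linarith
            · rw [hδpeek o₁ c₁, hδpop o₂ c₂ hv₂] at hδe
              linarith
            · have e₁ : o₁.method = StackMethod.peek := by
                cases h : o₁.method with
                | push => exact absurd h hm₁
                | pop => exact absurd h c₁
                | peek => rfl
              have e₂ : o₂.method = StackMethod.peek := by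
                cases h : o₂.method with
                | push => exact absurd h hm₂
                | pop => exact absurd h c₂
                | peek => rfl
              rw [e₁, e₂]
          refine op_ext ?_ hmm ?_ ?_ ?_
          · rw [← fail2peek_id o₁, ← fail2peek_id o₂, hf]
          · rw [hv, hv₂]
          · rw [← fail2peek_tinv o₁, ← fail2peek_tinv o₂, hf]
          · rw [← fail2peek_tres o₁, ← fail2peek_tres o₂, hf]
        · have hv₂ : o₂.value ≠ none := by
            rw [← fail2peek_value o₂, ← hf, fail2peek_value]; exact hv
          rw [fail2peek_of_some hv, fail2peek_of_some hv₂] at hf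
          exact hf
      · exfalso
        have hne' : ℓ' (fail2peek o₁) ≠ ℓ' (fail2peek o₂) := fun h =>
          hf (hinj' (Finset.mem_coe.2 (himgmem o₁ h₁)) (Finset.mem_coe.2 (himgmem o₂ h₂)) h)
        have b₁ := hδ0 o₁
        have b₂ := hδ0 o₂
        rcases lt_or_gt_of_ne hne' with h | h
        · have := hgap _ (himgmem o₁ h₁) _ (himgmem o₂ h₂) h
          linarith
        · have := hgap _ (himgmem o₂ h₂) _ (himgmem o₁ h₁) h
          linarith
    · intro o ho
      have h := hint' _ (himgmem o ho)
      rw [fail2peek_tinv, fail2peek_tres] at h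
      have b := hδ0 o
      have h2 := hinv2 o ho
      rw [hℓ]
      dsimp only
      constructor <;> linarith
  have hmemops : ∀ o, o ∈ rest.flatMap (pre H) ↔ o ∈ H := by
    intro o
    rw [List.mem_flatMap]
    constructor
    · rintro ⟨x, hx, ho⟩
      exact (pre_mem_f ((hrest x).1 hx) ho).1
    · intro hoH
      exact ⟨fail2peek o, (hrest _).2 (Finset.mem_image_of_mem _ hoH),
        mem_pre_self hoH (hpush o hoH)⟩
  have hprebnd : ∀ x ∈ H.image fail2peek, ∀ a ∈ pre H x, ℓ' x - ε ≤ ℓ a ∧ ℓ a ≤ ℓ' x := by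
    intro x hx a ha
    obtain ⟨haH, hfa⟩ := pre_mem_f hx ha
    have b := hδ0 a
    rw [hℓ]
    dsimp only
    rw [hfa]
    constructor <;> linarith
  have hpairops : (rest.flatMap (pre H)).Pairwise (fun a b => ℓ a < ℓ b) := by
    rw [List.pairwise_flatMap]
    constructor
    · intro x hx
      have hxi := (hrest x).1 hx
      by_cases hv : x.value = none
      · have hxm := img_none_method hxi hv
        rw [pre, if_pos hv]
        refine List.Pairwise.filter _ ?_
        refine List.pairwise_cons.2 ⟨?_, List.pairwise_singleton _ _⟩
        intro b hb
        rw [List.mem_singleton] at hb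
        subst hb
        have hf₁ : fail2peek { x with method := StackMethod.pop } = x :=
          fail2peek_setmethod hv hxm _
        have hf₂ : fail2peek { x with method := StackMethod.peek } = x :=
          fail2peek_setmethod hv hxm _
        have hd₁ : δ { x with method := StackMethod.pop } = ε := hδpop _ rfl hv
        have hd₂ : δ { x with method := StackMethod.peek } = 0 := by
          apply hδpeek
          intro hc
          exact StackMethod.noConfusion hc
        rw [hℓ]
        dsimp only
        rw [hf₁, hf₂, hd₁, hd₂]
        linarith
      · rw [pre, if_neg hv]
        exact List.pairwise_singleton _ _
    · refine List.Pairwise.imp_of_mem ?_ hpairrest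
      intro x y hx hy hlt a ha b hb
      have hxi := (hrest x).1 hx
      have hyi := (hrest y).1 hy
      have hga := hgap x (Finset.mem_insert_of_mem hxi) y (Finset.mem_insert_of_mem hyi) hlt
      have h1 := hprebnd x hxi a ha
      have h2 := hprebnd y hyi b hb
      linarith
  refine ⟨ℓ, (rest.flatMap (pre H)).map absStackOp, hlin,
    ⟨rest.flatMap (pre H), rfl, hmemops, hpairops⟩, ?_⟩
  -- executability
  rw [← hmap', List.map_cons] at hexec'
  have habsp0 : absStackOp p0 = StackOp.push none := by rw [hp0def]; rfl
  rw [habsp0] at hexec'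
  have hcont := exec_push_cons hexec'
  have hcont' : StackExec (([] : List V).map some ++ [none]) (rest.map absStackOp) σfin := by
    simpa using hcont
  obtain ⟨σ', hσ'⟩ := exec_expand H rest [] σfin (fun x hx => (hrest x).1 hx) hcont'
  refine ⟨σ', ?_⟩
  rw [List.map_flatMap]
  exact hσ'


theorem stmt16 {V : Type} [DecidableEq V]
    (H : Finset (Operation StackMethod (Option V)))
    (hne : H.Nonempty) (hwf : WellFormed H)
    (hpush : ∀ o ∈ H, o.method = StackMethod.push → o.value ≠ none) :
    Linearizable (TFStack V) absStackOp H ↔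
      Linearizable (TStack (Option V)) absStackOp
        (insert
          (⟨0, StackMethod.push, none,
            H.inf' hne (fun o => o.tinv) - 2, H.inf' hne (fun o => o.tinv) - 1⟩ :
              Operation StackMethod (Option V))
          (H.image (fun o =>
            if o.value = none then { o with method := StackMethod.peek } else o))) := by
  constructor
  · intro h
    exact forwardDir H hne hpush h
  · intro h
    exact backwardDir H hne hpush h
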